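/- arXiv:2004.03117 — 5 statements merged into one kernel-verified Lean document; each statement's English description precedes it below -/
import Mathlib

section
/- Fix $n \ge 1$, a real $s > 1$, and a sequence $(t_m)_{m \ge 1}$ of real numbers. Define the truncated multi-interpolated values $\zeta_n^{\vec{t}}(\{s\}_k) = \sum_{n \ge \ell_1 \ge \cdots \ge \ell_k \ge 1} \vec{t}^{\vec\sigma(\vec\ell)} \prod_{j=1}^k \ell_j^{-s}$ for $k \ge 1$, with $\zeta_n^{\vec{t}}(\{s\}_0) = 1$. Then as formal power series (equivalently, as rational-function identities in $z$ in a neighborhood of $0$): $\sum_{k \ge 0} \zeta_n^{\vec{t}}(\{s\}_k) z^k = \prod_{m=1}^n \Big(1 + \frac{m^{-s} z}{1 - m^{-s} t_m z}\Big)$. -/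
/-! Write `a = (n+1)^{-s}` and `d_k = ζ_{n+1}({s}_k) - ζ_n({s}_k)`: the tuples counted by `d_k`
are those with leading entry `n + 1`, and removing that entry gives
`d_{k+1} = a (ζ_n({s}_k) + t_{n+1} d_k)`, since the entry after it contributes `t_{n+1}` exactly
when it is `n + 1` again. On generating functions this reads `D = a z (Z_n + t_{n+1} D)`, i.e.
`Z_{n+1} = Z_n (1 + a z / (1 - a t_{n+1} z))`, and induction on `n` gives the product. All series
converge for small `z` because `|ζ_n({s}_k)| ≤ (∑_{m ≤ n} (1 + |t_m|) m^{-s})^k`. -/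

open Finset

/-- The finite set of weakly decreasing `k`-tuples with entries in `{1,…,n}`. -/
def decTuples (n k : ℕ) : Finset (Fin k → ℕ) :=
  (Fintype.piFinset fun _ : Fin k => Finset.Icc 1 n).filter
    fun f => ∀ i j : Fin k, i ≤ j → f j ≤ f i

/-- The interpolation weight `∏_j t_j^{σ_j(ℓ)}`: a factor `t (f (r+1))` for each
consecutive equality `f r = f (r+1)`. -/
def wt (t : ℕ → ℝ) {k : ℕ} (f : Fin k → ℕ) : ℝ :=
  ∏ r ∈ Finset.range k,
    if h : r + 1 < k then
      (if f ⟨r, Nat.lt_of_succ_lt h⟩ = f ⟨r + 1, h⟩ then t (f ⟨r + 1, h⟩) else 1)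
    else 1

/-- The truncated multi-interpolated value `ζ_n^{t}({s}_k)`. -/
noncomputable def zetaTrunc (n k : ℕ) (s : ℝ) (t : ℕ → ℝ) : ℝ :=
  ∑ f ∈ decTuples n k, wt t f * ∏ j : Fin k, ((f j : ℝ) ^ s)⁻¹

theorem Fin.antitone_cons {α : Type*} [Preorder α] {n : ℕ} {f : Fin n → α} {a : α} :
    Antitone (Fin.cons a f : Fin (n + 1) → α) ↔ (∀ i, f i ≤ a) ∧ Antitone f := by
  simp only [antitone_iff_forall_lt]
  exact Fin.liftFun_cons (· ≥ ·)

theorem mem_decTuples {n k : ℕ} {f : Fin k → ℕ} :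
    f ∈ decTuples n k ↔ (∀ i, f i ∈ Icc 1 n) ∧ Antitone f := by
  simp [decTuples, Antitone]

theorem cons_mem_decTuples {n k x : ℕ} {g : Fin k → ℕ} :
    Fin.cons x g ∈ decTuples n (k + 1) ↔ x ∈ Icc 1 n ∧ g ∈ decTuples x k := by
  simp only [mem_decTuples, Fin.forall_fin_succ, Fin.cons_zero, Fin.cons_succ, Fin.antitone_cons,
    mem_Icc]
  constructor
  · rintro ⟨⟨hx, hg⟩, hgx, hanti⟩
    exact ⟨hx, fun i => ⟨(hg i).1, hgx i⟩, hanti⟩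
  · rintro ⟨hx, hg, hanti⟩
    exact ⟨⟨hx, fun i => ⟨(hg i).1, (hg i).2.trans hx.2⟩⟩, fun i => (hg i).2, hanti⟩

theorem decTuples_subset_of_le {m n k : ℕ} (hmn : m ≤ n) : decTuples m k ⊆ decTuples n k := by
  intro f hf
  rw [mem_decTuples] at hf ⊢
  exact ⟨fun i => Icc_subset_Icc_right hmn (hf.1 i), hf.2⟩

theorem decTuples_zero_succ (k : ℕ) : decTuples 0 (k + 1) = ∅ := by
  ext f
  rw [← Fin.cons_self_tail f, cons_mem_decTuples]
  simp

theorem decTuples_length_zero (n : ℕ) : decTuples n 0 = {Fin.elim0} := by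
  ext f
  simp [mem_decTuples, Subsingleton.elim f Fin.elim0, Subsingleton.antitone]

theorem mem_decTuples_succ_sdiff {n k : ℕ} {f : Fin k → ℕ} :
    f ∈ decTuples (n + 1) k \ decTuples n k ↔
      f ∈ decTuples (n + 1) k ∧ ∃ h : 0 < k, f ⟨0, h⟩ = n + 1 := by
  rw [mem_sdiff, and_congr_right_iff]
  intro hf
  rw [mem_decTuples] at hf ⊢
  obtain ⟨hrange, hanti⟩ := hf
  constructor
  · intro hnot
    obtain ⟨i, hi⟩ : ∃ i, f i ∉ Icc 1 n := by
      by_contra! h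
      exact hnot ⟨h, hanti⟩
    have hfi : f i = n + 1 := by
      have := mem_Icc.mp (hrange i)
      simp only [mem_Icc, not_and, not_le] at hi
      omega
    have hle : f i ≤ f ⟨0, i.pos⟩ := hanti (Nat.zero_le i.val)
    exact ⟨i.pos, le_antisymm (mem_Icc.mp (hrange _)).2 (hfi ▸ hle)⟩
  · rintro ⟨h, hf0⟩ ⟨hrange', -⟩
    simpa [hf0] using hrange' ⟨0, h⟩

theorem wt_cons (t : ℕ → ℝ) {k : ℕ} (x : ℕ) (g : Fin k → ℕ) :
    wt t (Fin.cons x g : Fin (k + 1) → ℕ) =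
      (if ∃ h : 0 < k, g ⟨0, h⟩ = x then t x else 1) * wt t g := by
  rw [wt, prod_range_succ', mul_comm]
  congr 1
  · cases k with
    | zero => simp
    | succ k => by_cases hx : g 0 = x <;> simp [hx, eq_comm (a := x)]
  · refine prod_congr rfl fun r _ => ?_
    by_cases h : r + 1 < k
    · simp only [h, add_lt_add_iff_right, dite_true]
      rfl
    · simp [h]

noncomputable def zetaTerm (s : ℝ) (t : ℕ → ℝ) {k : ℕ} (f : Fin k → ℕ) : ℝ :=
  wt t f * ∏ j, ((f j : ℝ) ^ s)⁻¹

theorem zetaTrunc_eq_sum_zetaTerm (n k : ℕ) (s : ℝ) (t : ℕ → ℝ) :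
    zetaTrunc n k s t = ∑ f ∈ decTuples n k, zetaTerm s t f := rfl

theorem zetaTerm_cons (s : ℝ) (t : ℕ → ℝ) {k : ℕ} (x : ℕ) (g : Fin k → ℕ) :
    zetaTerm s t (Fin.cons x g : Fin (k + 1) → ℕ) =
      ((x : ℝ) ^ s)⁻¹ * ((if ∃ h : 0 < k, g ⟨0, h⟩ = x then t x else 1) * zetaTerm s t g) := by
  simp only [zetaTerm, wt_cons, Fin.prod_univ_succ, Fin.cons_zero, Fin.cons_succ]
  ring

theorem zetaTrunc_succ_sub (n k : ℕ) (s : ℝ) (t : ℕ → ℝ) :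
    zetaTrunc (n + 1) k s t - zetaTrunc n k s t =
      ∑ f ∈ decTuples (n + 1) k \ decTuples n k, zetaTerm s t f :=
  (sum_sdiff_eq_sub (decTuples_subset_of_le n.le_succ)).symm

theorem sum_decTuples_succ_sdiff {M : Type*} [AddCommMonoid M] (n k : ℕ)
    (F : (Fin (k + 1) → ℕ) → M) :
    ∑ f ∈ decTuples (n + 1) (k + 1) \ decTuples n (k + 1), F f =
      ∑ g ∈ decTuples (n + 1) k, F (Fin.cons (n + 1) g) := by
  have head : ∀ f ∈ decTuples (n + 1) (k + 1) \ decTuples n (k + 1), f 0 = n + 1 :=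
    fun f hf => (mem_decTuples_succ_sdiff.mp hf).2.2
  refine sum_nbij' Fin.tail (fun g => (Fin.cons (n + 1) g : Fin (k + 1) → ℕ))
    (fun f hf => ?_) (fun g hg => ?_) (fun f hf => ?_) (fun _ _ => Fin.tail_cons _ _)
    (fun f hf => ?_)
  · have hmem := (mem_decTuples_succ_sdiff.mp hf).1
    rw [← Fin.cons_self_tail f, cons_mem_decTuples, head f hf] at hmem
    exact hmem.2
  · exact mem_decTuples_succ_sdiff.mpr
      ⟨cons_mem_decTuples.mpr ⟨by simp, hg⟩, k.succ_pos, rfl⟩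
  · rw [← head f hf, Fin.cons_self_tail]
  · rw [← head f hf, Fin.cons_self_tail]

theorem zetaTrunc_succ_succ_sub (n k : ℕ) (s : ℝ) (t : ℕ → ℝ) :
    zetaTrunc (n + 1) (k + 1) s t - zetaTrunc n (k + 1) s t =
      (((n + 1 : ℕ) : ℝ) ^ s)⁻¹ *
        (zetaTrunc n k s t + t (n + 1) * (zetaTrunc (n + 1) k s t - zetaTrunc n k s t)) := by
  rw [zetaTrunc_succ_sub, sum_decTuples_succ_sdiff]
  simp only [zetaTerm_cons]
  rw [← mul_sum]
  congr 1
  rw [← sum_sdiff (decTuples_subset_of_le n.le_succ), add_comm (∑ _ ∈ _ \ _, _),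
    zetaTrunc_succ_sub, mul_sum, zetaTrunc_eq_sum_zetaTerm]
  congr 1
  · refine sum_congr rfl fun g hg => ?_
    have hhead : ¬∃ h : 0 < k, g ⟨0, h⟩ = n + 1 := fun hex =>
      (mem_sdiff.mp (mem_decTuples_succ_sdiff.mpr ⟨decTuples_subset_of_le n.le_succ hg, hex⟩)).2
        hg
    rw [if_neg hhead, one_mul]
  · exact sum_congr rfl fun g hg => by rw [if_pos (mem_decTuples_succ_sdiff.mp hg).2]

theorem zetaTrunc_length_zero (n : ℕ) (s : ℝ) (t : ℕ → ℝ) : zetaTrunc n 0 s t = 1 := by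
  simp [zetaTrunc, decTuples_length_zero, wt]

theorem zetaTrunc_zero_succ (k : ℕ) (s : ℝ) (t : ℕ → ℝ) :
    zetaTrunc 0 (k + 1) s t = 0 := by
  simp [zetaTrunc, decTuples_zero_succ]

theorem abs_wt_le (t : ℕ → ℝ) {k : ℕ} (f : Fin k → ℕ) :
    |wt t f| ≤ ∏ j, (1 + |t (f j)|) := by
  rw [wt, prod_range, abs_prod]
  refine prod_le_prod (fun _ _ => abs_nonneg _) fun j _ => ?_
  have hone : |(1 : ℝ)| ≤ 1 + |t (f j)| := by simp
  split_ifs with hlt heq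
  · rw [← heq]
    exact le_add_of_nonneg_left zero_le_one
  · exact hone
  · exact hone

theorem abs_zetaTerm_le (s : ℝ) (t : ℕ → ℝ) {k : ℕ} (f : Fin k → ℕ) :
    |zetaTerm s t f| ≤ ∏ j, (1 + |t (f j)|) * ((f j : ℝ) ^ s)⁻¹ := by
  have hpow : ∀ j, 0 ≤ ((f j : ℝ) ^ s)⁻¹ := fun j => inv_nonneg.mpr (by positivity)
  rw [zetaTerm, abs_mul, abs_prod, prod_mul_distrib]
  simp only [abs_of_nonneg (hpow _)]
  exact mul_le_mul_of_nonneg_right (abs_wt_le t f) (prod_nonneg fun j _ => hpow j)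

noncomputable def zetaBound (n : ℕ) (s : ℝ) (t : ℕ → ℝ) : ℝ :=
  ∑ m ∈ Icc 1 n, (1 + |t m|) * ((m : ℝ) ^ s)⁻¹

theorem zetaBound_nonneg (n : ℕ) (s : ℝ) (t : ℕ → ℝ) : 0 ≤ zetaBound n s t :=
  sum_nonneg fun _ _ => by positivity

theorem zetaBound_mono {m n : ℕ} (hmn : m ≤ n) (s : ℝ) (t : ℕ → ℝ) :
    zetaBound m s t ≤ zetaBound n s t :=
  sum_le_sum_of_subset_of_nonneg (Icc_subset_Icc_right hmn) fun _ _ _ => by positivity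

theorem abs_inv_rpow_mul_le_zetaBound {m n : ℕ} (hm : m ∈ Icc 1 n) (s : ℝ) (t : ℕ → ℝ) :
    |((m : ℝ) ^ s)⁻¹ * t m| ≤ zetaBound n s t :=
  calc |((m : ℝ) ^ s)⁻¹ * t m| = |t m| * ((m : ℝ) ^ s)⁻¹ := by
        rw [abs_mul, abs_of_nonneg (by positivity), mul_comm]
    _ ≤ (1 + |t m|) * ((m : ℝ) ^ s)⁻¹ := by gcongr; exact le_add_of_nonneg_left zero_le_one
    _ ≤ zetaBound n s t := single_le_sum (f := fun m => (1 + |t m|) * ((m : ℝ) ^ s)⁻¹)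
        (fun _ _ => by positivity) hm

theorem abs_zetaTrunc_le (n k : ℕ) (s : ℝ) (t : ℕ → ℝ) :
    |zetaTrunc n k s t| ≤ zetaBound n s t ^ k :=
  calc |zetaTrunc n k s t|
      ≤ ∑ f ∈ decTuples n k, |zetaTerm s t f| := abs_sum_le_sum_abs _ _
    _ ≤ ∑ f ∈ decTuples n k, ∏ j, (1 + |t (f j)|) * ((f j : ℝ) ^ s)⁻¹ :=
        sum_le_sum fun f _ => abs_zetaTerm_le s t f
    _ ≤ ∑ f ∈ Fintype.piFinset fun _ : Fin k => Icc 1 n,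
          ∏ j, (1 + |t (f j)|) * ((f j : ℝ) ^ s)⁻¹ :=
        sum_le_sum_of_subset_of_nonneg (filter_subset _ _) fun _ _ _ =>
          prod_nonneg fun _ _ => by positivity
    _ = zetaBound n s t ^ k := by
        rw [zetaBound, ← prod_univ_sum (fun _ : Fin k => Icc 1 n)
          fun _ m => (1 + |t m|) * ((m : ℝ) ^ s)⁻¹, prod_const, card_univ, Fintype.card_fin]

theorem summable_zetaTrunc_mul_pow (n : ℕ) (s : ℝ) (t : ℕ → ℝ) {z : ℝ}
    (hz : |z| * zetaBound n s t < 1) :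
    Summable fun k => zetaTrunc n k s t * z ^ k := by
  refine Summable.of_norm_bounded
    (summable_geometric_of_lt_one (mul_nonneg (abs_nonneg z) (zetaBound_nonneg n s t)) hz)
    fun k => ?_
  rw [Real.norm_eq_abs, abs_mul, abs_pow, mul_pow, mul_comm (|z| ^ k)]
  exact mul_le_mul_of_nonneg_right (abs_zetaTrunc_le n k s t) (by positivity)

theorem hasSum_mul_one_add_div_of_recurrence {K : Type*} [Field K] [TopologicalSpace K]
    [IsTopologicalRing K] [T2Space K] {f g : ℕ → K} {a τ z F : K}
    (hF : HasSum (fun k => f k * z ^ k) F) (hg : Summable fun k => g k * z ^ k)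
    (h0 : g 0 = f 0) (hrec : ∀ k, g (k + 1) - f (k + 1) = a * (f k + τ * (g k - f k)))
    (hden : 1 - a * τ * z ≠ 0) :
    HasSum (fun k => g k * z ^ k) (F * (1 + a * z / (1 - a * τ * z))) := by
  obtain ⟨G, hG⟩ := hg
  set d : ℕ → K := fun k => (g k - f k) * z ^ k
  have hd : HasSum d (G - F) := by simpa only [d, sub_mul] using hG.sub hF
  have hshift : HasSum (fun k => d (k + 1)) (G - F) := by
    simpa [d, h0] using (hasSum_nat_add_iff' 1).mpr hd
  have hstep : HasSum (fun k => d (k + 1)) (a * z * (F + τ * (G - F))) := by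
    have hd_succ : ∀ k, d (k + 1) = a * z * (f k * z ^ k + τ * d k) := fun k => by
      simp only [d, hrec, pow_succ]
      ring
    simpa only [hd_succ] using ((hF.add (hd.mul_left τ)).mul_left (a * z))
  have hG_eq : G = F * (1 + a * z / (1 - a * τ * z)) := by
    have hGF : G - F = a * z * F / (1 - a * τ * z) := by
      rw [eq_div_iff hden]
      linear_combination hshift.unique hstep
    linear_combination hGF
  rwa [← hG_eq]

theorem hasSum_zetaTrunc_of_summable (n : ℕ) (s : ℝ) (t : ℕ → ℝ) (z : ℝ)
    (hsum : ∀ m ≤ n, Summable fun k => zetaTrunc m k s t * z ^ k)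
    (hden : ∀ m ∈ Icc 1 n, 1 - ((m : ℝ) ^ s)⁻¹ * t m * z ≠ 0) :
    HasSum (fun k => zetaTrunc n k s t * z ^ k)
      (∏ m ∈ Icc 1 n, (1 + ((m : ℝ) ^ s)⁻¹ * z / (1 - ((m : ℝ) ^ s)⁻¹ * t m * z))) := by
  induction n with
  | zero =>
    simpa [zetaTrunc_length_zero] using hasSum_single (f := fun k => zetaTrunc 0 k s t * z ^ k) 0
      fun k hk => by obtain ⟨k, rfl⟩ := Nat.exists_eq_succ_of_ne_zero hk; simp [zetaTrunc_zero_succ]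
  | succ n ih =>
    rw [prod_Icc_succ_top (by omega)]
    exact hasSum_mul_one_add_div_of_recurrence
      (ih (fun m hm => hsum m (by omega)) fun m hm => hden m (Icc_subset_Icc_right n.le_succ hm))
      (hsum _ le_rfl) (by simp only [zetaTrunc_length_zero]) (zetaTrunc_succ_succ_sub n · s t)
      (hden _ (by simp))

theorem zetaTrunc_generating_function_general
    (n : ℕ) (s : ℝ) (t : ℕ → ℝ) :
    ∃ ε > (0 : ℝ), ∀ z : ℝ, |z| < ε →
      HasSum (fun k : ℕ => zetaTrunc n k s t * z ^ k)
        (∏ m ∈ Finset.Icc 1 n,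
          (1 + ((m : ℝ) ^ s)⁻¹ * z / (1 - ((m : ℝ) ^ s)⁻¹ * t m * z))) := by
  set B := zetaBound n s t
  have hB : 0 ≤ B := zetaBound_nonneg n s t
  refine ⟨(B + 1)⁻¹, by positivity, fun z hz => ?_⟩
  have hzB : |z| * B < 1 :=
    calc |z| * B ≤ |z| * (B + 1) := by linarith [abs_nonneg z]
      _ < (B + 1)⁻¹ * (B + 1) := mul_lt_mul_of_pos_right hz (by positivity)
      _ = 1 := inv_mul_cancel₀ (by positivity)
  refine hasSum_zetaTrunc_of_summable n s t z (fun m hm => ?_) fun m hm => ?_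
  · exact summable_zetaTrunc_mul_pow m s t
      ((mul_le_mul_of_nonneg_left (zetaBound_mono hm s t) (abs_nonneg z)).trans_lt hzB)
  · have hlt : |((m : ℝ) ^ s)⁻¹ * t m * z| < 1 := by
      rw [abs_mul, mul_comm]
      exact (mul_le_mul_of_nonneg_left (abs_inv_rpow_mul_le_zetaBound hm s t)
        (abs_nonneg z)).trans_lt hzB
    exact sub_ne_zero.mpr ((le_abs_self _).trans_lt hlt).ne'

/-- Generating function of the truncated multi-interpolated values:
`∑_{k≥0} ζ_n^t({s}_k) z^k = ∏_{m=1}^n (1 + m^{-s} z / (1 - m^{-s} t_m z))`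
for `z` in a neighbourhood of `0`. -/
theorem zetaTrunc_generating_function
    (n : ℕ) (hn : 1 ≤ n) (s : ℝ) (hs : 1 < s) (t : ℕ → ℝ) :
    ∃ ε > (0 : ℝ), ∀ z : ℝ, |z| < ε →
      HasSum (fun k : ℕ => zetaTrunc n k s t * z ^ k)
        (∏ m ∈ Finset.Icc 1 n,
          (1 + ((m : ℝ) ^ s)⁻¹ * z / (1 - ((m : ℝ) ^ s)⁻¹ * t m * z))) :=
  zetaTrunc_generating_function_general n s t
end

section
/- For real $t \in [0,1]$, integer $s \ge 2$, and $k \ge 0$, the interpolated values $\zeta^t(\{s\}_k) = \sum_{\ell_1 \ge \cdots \ge \ell_k \ge 1} t^{\sigma(\vec\ell)} \prod_j \ell_j^{-s}$ (with $\sigma(\vec\ell)$ the number of indices $r$ with $\ell_r = \ell_{r+1}$) satisfy the convolution $\zeta^t(\{s\}_k) = \sum_{\ell=0}^k t^\ell (1-t)^{k-\ell} \zeta^\star(\{s\}_\ell) \zeta(\{s\}_{k-\ell})$, where $\zeta^\star(\{s\}_\ell) = \sum_{m_1 \ge \cdots \ge m_\ell \ge 1} \prod m_j^{-s}$ and $\zeta(\{s\}_r)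 = \sum_{m_1 > \cdots > m_r \ge 1} \prod m_j^{-s}$, with the $\ell = 0$ and $r = 0$ values equal to $1$. -/
/-- Number of consecutive equalities `σ(ℓ)` of a tuple. -/
def sigmaCount {k : ℕ} (f : Fin k → ℕ) : ℕ :=
  ∑ r ∈ Finset.range k,
    if h : r + 1 < k then
      (if f ⟨r, Nat.lt_of_succ_lt h⟩ = f ⟨r + 1, h⟩ then 1 else 0)
    else 0

/-- Interpolated value `ζ^t({s}_k)`. -/
noncomputable def zetaInterp (s k : ℕ) (t : ℝ) : ℝ :=
  ∑' f : Fin k → ℕ,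
    if (∀ j, 1 ≤ f j) ∧ (∀ i j : Fin k, i ≤ j → f j ≤ f i) then
      t ^ sigmaCount f * ∏ j : Fin k, ((f j : ℝ) ^ s)⁻¹
    else 0

/-- Star value `ζ^⋆({s}_ℓ)`. -/
noncomputable def zetaStarVal (s ℓ : ℕ) : ℝ :=
  ∑' f : Fin ℓ → ℕ,
    if (∀ j, 1 ≤ f j) ∧ (∀ i j : Fin ℓ, i ≤ j → f j ≤ f i) then
      ∏ j : Fin ℓ, ((f j : ℝ) ^ s)⁻¹
    else 0

/-- MZV `ζ({s}_r)`. -/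
noncomputable def zetaVal (s r : ℕ) : ℝ :=
  ∑' f : Fin r → ℕ,
    if (∀ j, 1 ≤ f j) ∧ (∀ i j : Fin r, i < j → f j < f i) then
      ∏ j : Fin r, ((f j : ℝ) ^ s)⁻¹
    else 0

/-!
Truncate all sums to entries at most `N`. A weakly decreasing tuple amounts to a choice of
multiplicities, and a block of `m ≥ 1` entries equal to `n` contributes `t ^ (m - 1) n^(-s m)`,
so the generating series `∑ₖ ζᵗ_N({s}_k) Xᵏ` is `∏_{n ≤ N} (1 + (1 - t) n⁻ˢ X) / (1 - t n⁻ˢ X)`;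
passing from `N` to `N + 1` multiplies in one factor, by splitting off the leading entry.
The product is the `t = 1` series evaluated at `t X` times the `t = 0` series evaluated at
`(1 - t) X`, which is the convolution for every `N`. For `s ≥ 2` and `0 ≤ t ≤ 1` all series
converge absolutely, so the identity passes to the limit `N → ∞`.
-/

open Finset Fintype PowerSeries Filter Topology

theorem antitone_fin_cons_iff {α : Type*} [Preorder α] {k : ℕ} (a : α) (g : Fin k → α) :
    Antitone (Fin.cons a g : Fin (k + 1) → α) ↔ (∀ j, g j ≤ a) ∧ Antitone g := by
  refine ⟨fun h => ⟨fun j => by simpa using h (Fin.zero_le j.succ),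
    fun i j hij => by simpa using h (Fin.succ_le_succ_iff.mpr hij)⟩,
    fun ⟨hga, hg⟩ i j hij => ?_⟩
  cases i using Fin.cases <;> cases j using Fin.cases
  · exact le_rfl
  · simpa using hga _
  · simp at hij
  · simpa using hg (Fin.succ_le_succ_iff.mp hij)

theorem sum_piFinset_fin_succ {β M : Type*} [AddCommMonoid M] (k : ℕ) (u : Finset β)
    (F : (Fin (k + 1) → β) → M) :
    ∑ f ∈ piFinset (fun _ => u), F f =
      ∑ a ∈ u, ∑ g ∈ piFinset (fun _ : Fin k => u), F (Fin.cons a g) := by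
  classical
  have h := filter_piFinset_eq_map_consEquiv (fun _ : Fin (k + 1) => u) fun _ => True
  simp only [filter_true] at h
  rw [h, sum_map, sum_product]
  rfl

theorem mem_piFinset_range_succ {k N : ℕ} {f : Fin k → ℕ} :
    f ∈ piFinset (fun _ => range (N + 1)) ↔ ∀ j, f j ≤ N := by
  simp only [mem_piFinset, mem_range_succ_iff]

theorem sigmaCount_cons {k : ℕ} (a : ℕ) (g : Fin k → ℕ) :
    sigmaCount (Fin.cons a g : Fin (k + 1) → ℕ) =
      sigmaCount g + if h : 0 < k then (if a = g ⟨0, h⟩ then 1 else 0) else 0 := by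
  unfold sigmaCount
  rw [sum_range_succ']
  congr 1
  · refine sum_congr rfl fun r hr => ?_
    by_cases h : r + 1 < k
    · rw [dif_pos (by omega), dif_pos h]
      rfl
    · rw [dif_neg (by omega), dif_neg h]
  · by_cases h : 0 < k
    · rw [dif_pos (by omega), dif_pos h]
      rfl
    · rw [dif_neg (by omega), dif_neg h]

theorem sigmaCount_eq_zero_iff {k : ℕ} {f : Fin k → ℕ} (hf : Antitone f) :
    sigmaCount f = 0 ↔ StrictAnti f := by
  rcases k with _ | n
  · simp [sigmaCount, StrictAnti]
  rw [Fin.strictAnti_iff_succ_lt, sigmaCount, sum_eq_zero_iff]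
  constructor
  · intro h i
    have hi := h i (by simp)
    rw [dif_pos (by omega)] at hi
    split_ifs at hi with he
    exact lt_of_le_of_ne (hf (Fin.castSucc_le_succ i)) (Ne.symm he)
  · intro h r hr
    split_ifs with hr' he
    · exact absurd he (h ⟨r, by omega⟩).ne'
    all_goals rfl

theorem PowerSeries.rescale_C {R : Type*} [CommSemiring R] (a c : R) :
    rescale a (C c) = C c := by
  ext (_ | n) <;> simp [coeff_C]

theorem summable_prod_fin_of_nonneg {β : Type*} {w : β → ℝ} (hw0 : 0 ≤ w) (hw : Summable w)
    (k : ℕ) : Summable fun f : Fin k → β => ∏ j, w (f j) := by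
  induction k with
  | zero => exact Summable.of_finite
  | succ k ih =>
    refine (Equiv.summable_iff (Fin.consEquiv fun _ => β)).mp ?_
    refine (hw.mul_of_nonneg ih hw0 fun f => prod_nonneg fun j _ => hw0 _).congr fun p => ?_
    simp [Fin.consEquiv, Fin.prod_univ_succ]

namespace ZetaInterp

variable (s : ℕ) (t : ℝ)

noncomputable def term {k : ℕ} (f : Fin k → ℕ) : ℝ :=
  if (∀ j, 1 ≤ f j) ∧ (∀ i j : Fin k, i ≤ j → f j ≤ f i) then
    t ^ sigmaCount f * ∏ j, ((f j : ℝ) ^ s)⁻¹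
  else 0

theorem term_cons_eq_zero {k a : ℕ} {g : Fin k → ℕ} (h : ¬ ∀ j, g j ≤ a) :
    term s t (Fin.cons a g) = 0 :=
  if_neg fun hc => h ((antitone_fin_cons_iff a g).1 hc.2).1

-- The extra factor `t` is present exactly when the tail also starts with `N + 1`.
theorem term_cons_succ {k : ℕ} (N : ℕ) {g : Fin k → ℕ}
    (hg : g ∈ piFinset fun _ => range (N + 2)) :
    term s t (Fin.cons (N + 1) g) = ((N + 1 : ℝ) ^ s)⁻¹ * (t * term s t g +
      (1 - t) * if g ∈ piFinset (fun _ => range (N + 1)) then term s t g else 0) := by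
  rw [mem_piFinset_range_succ] at hg
  unfold term
  by_cases hg' : (∀ j, 1 ≤ g j) ∧ ∀ i j : Fin k, i ≤ j → g j ≤ g i
  · have hcons : (∀ j, 1 ≤ (Fin.cons (N + 1) g : Fin (k + 1) → ℕ) j) ∧
        ∀ i j : Fin (k + 1), i ≤ j → (Fin.cons (N + 1) g : Fin (k + 1) → ℕ) j ≤
          (Fin.cons (N + 1) g : Fin (k + 1) → ℕ) i :=
      ⟨Fin.cases (by simp) (by simpa using hg'.1), (antitone_fin_cons_iff _ _).2 ⟨hg, hg'.2⟩⟩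
    have hhead : (if h : 0 < k then (if N + 1 = g ⟨0, h⟩ then 1 else 0) else 0) =
        if g ∈ piFinset (fun _ => range (N + 1)) then 0 else 1 := by
      simp only [mem_piFinset_range_succ]
      rcases Nat.eq_zero_or_pos k with rfl | hk
      · simp
      · have hmax : ∀ j, g j ≤ g ⟨0, hk⟩ := fun j => hg'.2 ⟨0, hk⟩ j (Nat.zero_le _)
        rw [dif_pos hk]
        split_ifs with h0 hN hN <;> first | rfl | exfalso
        · have := hN ⟨0, hk⟩; omega
        · exact hN fun j => by have := hmax j; have := hg ⟨0, hk⟩; omega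
    rw [if_pos hcons, if_pos hg', sigmaCount_cons, hhead, Fin.prod_univ_succ]
    simp only [Fin.cons_zero, Fin.cons_succ]
    split_ifs <;> push_cast <;> ring
  · rw [if_neg fun hc => hg' ⟨fun j => by simpa using hc.1 j.succ,
      ((antitone_fin_cons_iff _ _).1 hc.2).2⟩, if_neg hg']
    simp

noncomputable def truncSum (N k : ℕ) : ℝ :=
  ∑ f ∈ piFinset (fun _ : Fin k => range (N + 1)), term s t f

theorem truncSum_zero_right (N : ℕ) : truncSum s t N 0 = 1 := by
  simp [truncSum, term, sigmaCount]

theorem truncSum_zero_succ (k : ℕ) : truncSum s t 0 (k + 1) = 0 :=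
  sum_eq_zero fun f hf => if_neg fun h => by
    have := h.1 0
    have := mem_piFinset_range_succ.1 hf 0
    omega

theorem truncSum_succ_succ (N k : ℕ) :
    truncSum s t (N + 1) (k + 1) = truncSum s t N (k + 1) +
      ((N + 1 : ℝ) ^ s)⁻¹ * (t * truncSum s t (N + 1) k + (1 - t) * truncSum s t N k) := by
  have hsub : piFinset (fun _ : Fin k => range (N + 1)) ⊆ piFinset fun _ => range (N + 2) :=
    piFinset_subset _ _ fun _ => range_subset_range.2 (by omega)
  have hlow : ∀ a ∈ range (N + 1), ∑ g ∈ piFinset (fun _ : Fin k => range (N + 2)),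
      term s t (Fin.cons a g) = ∑ g ∈ piFinset (fun _ : Fin k => range (N + 1)),
      term s t (Fin.cons a g) := fun a ha =>
    (sum_subset hsub fun g _ hg => term_cons_eq_zero s t fun hga => hg <|
      mem_piFinset_range_succ.2 fun j => (hga j).trans (mem_range_succ_iff.1 ha)).symm
  rw [truncSum, sum_piFinset_fin_succ, sum_range_succ, sum_congr rfl hlow,
    ← sum_piFinset_fin_succ, sum_congr rfl fun g hg => term_cons_succ s t N hg, ← mul_sum,
    sum_add_distrib, ← mul_sum, ← mul_sum, Finset.sum_ite_mem, inter_eq_right.2 hsub]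
  rfl

noncomputable def truncSeries (N : ℕ) : ℝ⟦X⟧ := PowerSeries.mk (truncSum s t N)

theorem truncSeries_zero : truncSeries s t 0 = 1 := by
  ext (_ | k) <;> simp [truncSeries, truncSum_zero_right, truncSum_zero_succ, coeff_one]

theorem truncSeries_succ (N : ℕ) :
    (1 - C (t * ((N + 1 : ℝ) ^ s)⁻¹) * X) * truncSeries s t (N + 1) =
      (1 + C ((1 - t) * ((N + 1 : ℝ) ^ s)⁻¹) * X) * truncSeries s t N := by
  ext (_ | k)
  · simp [truncSeries, truncSum_zero_right]
  · simp [truncSeries, sub_mul, add_mul, mul_assoc, coeff_succ_X_mul, truncSum_succ_succ]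
    ring

theorem truncSeries_eq_rescale_mul_rescale (N : ℕ) :
    truncSeries s t N =
      rescale t (truncSeries s 1 N) * rescale (1 - t) (truncSeries s 0 N) := by
  induction N with
  | zero => simp [truncSeries_zero]
  | succ N ih =>
    set u : ℝ := ((N + 1 : ℝ) ^ s)⁻¹
    have h1 : (1 - C (t * u) * X) * rescale t (truncSeries s 1 (N + 1)) =
        rescale t (truncSeries s 1 N) := by
      simpa [rescale_X, rescale_C, mul_comm t, mul_assoc] using
        congrArg (rescale t) (truncSeries_succ s 1 N)
    have h0 : rescale (1 - t) (truncSeries s 0 (N + 1)) =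
        (1 + C ((1 - t) * u) * X) * rescale (1 - t) (truncSeries s 0 N) := by
      simpa [rescale_X, rescale_C, mul_comm (1 - t), mul_assoc] using
        congrArg (rescale (1 - t)) (truncSeries_succ s 0 N)
    have hne : (1 - C (t * u) * X : ℝ⟦X⟧) ≠ 0 := fun h => by
      simpa using congrArg constantCoeff h
    apply mul_left_cancel₀ hne
    rw [truncSeries_succ, ih, h0, ← h1]
    ring

theorem truncSum_eq_sum_range (N k : ℕ) :
    truncSum s t N k = ∑ ℓ ∈ range (k + 1),
      t ^ ℓ * (1 - t) ^ (k - ℓ) * truncSum s 1 N ℓ * truncSum s 0 N (k - ℓ) := by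
  have h := congrArg (coeff k) (truncSeries_eq_rescale_mul_rescale s t N)
  simp only [coeff_mul, Nat.sum_antidiagonal_eq_sum_range_succ_mk, truncSeries, coeff_rescale,
    coeff_mk] at h
  rw [h]
  exact sum_congr rfl fun ℓ _ => by ring

theorem term_nonneg (ht : 0 ≤ t) {k : ℕ} (f : Fin k → ℕ) : 0 ≤ term s t f := by
  unfold term
  split_ifs
  · positivity
  · exact le_rfl

theorem term_le_prod (ht : t ∈ Set.Icc 0 1) {k : ℕ} (f : Fin k → ℕ) :
    term s t f ≤ ∏ j, ((f j : ℝ) ^ s)⁻¹ := by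
  unfold term
  split_ifs
  · exact mul_le_of_le_one_left (by positivity) (pow_le_one₀ ht.1 ht.2)
  · positivity

theorem summable_term (hs : 1 < s) (ht : t ∈ Set.Icc 0 1) (k : ℕ) :
    Summable fun f : Fin k → ℕ => term s t f :=
  (summable_prod_fin_of_nonneg (fun _ => by positivity) (Real.summable_nat_pow_inv.2 hs)
    k).of_nonneg_of_le (term_nonneg s t ht.1) (term_le_prod s t ht)

theorem tendsto_truncSum (hs : 1 < s) (ht : t ∈ Set.Icc 0 1) (k : ℕ) :
    Tendsto (fun N => truncSum s t N k) atTop (𝓝 (zetaInterp s k t)) := by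
  refine (summable_term s t hs ht k).hasSum.comp (tendsto_atTop_finset_of_monotone ?_ ?_)
  · exact fun M N hMN => piFinset_subset _ _ fun _ => range_subset_range.2 (by omega)
  · exact fun f => ⟨∑ j, f j, mem_piFinset_range_succ.2 fun j =>
      single_le_sum (fun i _ => Nat.zero_le (f i)) (mem_univ j)⟩

theorem zetaStarVal_eq_zetaInterp_one (ℓ : ℕ) : zetaStarVal s ℓ = zetaInterp s ℓ 1 := by
  simp only [zetaStarVal, zetaInterp, one_pow, one_mul]

theorem zetaVal_eq_zetaInterp_zero (r : ℕ) : zetaVal s r = zetaInterp s r 0 := by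
  refine tsum_congr fun f => ?_
  by_cases hf : (∀ j, 1 ≤ f j) ∧ Antitone f
  · have hcond : (∀ j, 1 ≤ f j) ∧ ∀ i j : Fin r, i ≤ j → f j ≤ f i := hf
    rw [if_pos hcond]
    by_cases hsa : StrictAnti f
    · have hstrict : (∀ j, 1 ≤ f j) ∧ ∀ i j : Fin r, i < j → f j < f i := ⟨hf.1, hsa⟩
      rw [if_pos hstrict, (sigmaCount_eq_zero_iff hf.2).2 hsa, pow_zero, one_mul]
    · have hstrict : ¬ ((∀ j, 1 ≤ f j) ∧ ∀ i j : Fin r, i < j → f j < f i) :=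
        fun h => hsa h.2
      rw [if_neg hstrict, zero_pow ((sigmaCount_eq_zero_iff hf.2).not.2 hsa), zero_mul]
  · have hstrict : ¬ ((∀ j, 1 ≤ f j) ∧ StrictAnti f) := fun h => hf ⟨h.1, h.2.antitone⟩
    exact (if_neg hstrict).trans (if_neg hf).symm

end ZetaInterp

open ZetaInterp

/-- Convolution identity for interpolated multiple zeta values:
`ζ^t({s}_k) = ∑_{ℓ=0}^k t^ℓ (1-t)^{k-ℓ} ζ^⋆({s}_ℓ) ζ({s}_{k-ℓ})`. -/
theorem zetaInterp_convolution
    (t : ℝ) (ht : t ∈ Set.Icc (0 : ℝ) 1) (s : ℕ) (hs : 2 ≤ s) (k : ℕ) :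
    zetaInterp s k t
      = ∑ ℓ ∈ Finset.range (k + 1),
          t ^ ℓ * (1 - t) ^ (k - ℓ) * zetaStarVal s ℓ * zetaVal s (k - ℓ) := by
  have hlim := tendsto_finsetSum (range (k + 1)) fun ℓ _ =>
    (tendsto_const_nhds (x := t ^ ℓ * (1 - t) ^ (k - ℓ))).mul
      (tendsto_truncSum s 1 hs ⟨zero_le_one, le_rfl⟩ ℓ) |>.mul
      (tendsto_truncSum s 0 hs ⟨le_rfl, zero_le_one⟩ (k - ℓ))
  simp only [← truncSum_eq_sum_range] at hlim
  simp only [zetaStarVal_eq_zetaInterp_one, zetaVal_eq_zetaInterp_zero]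
  exact tendsto_nhds_unique (tendsto_truncSum s t hs ht k) hlim
end

section
/- Fix $k \ge 1$ and integers $i_1 \ge 2$, $i_2, \dots, i_k \ge 1$, and a sequence $(t_m)$ with $t_m \in [-1,1]$. Then $\zeta^{\vec{t}}(i_1,\dots,i_k) = \sum_{\mathbf{p} = (p_1,\dots,p_r) \in \mathcal{P}(k)} \sum_{\ell_1 > \cdots > \ell_r \ge 1} \prod_{j=1}^r \frac{t_{\ell_j}^{p_j - 1}}{\ell_j^{I_j}}$, where the outer sum is over compositions (ordered partitions) $\mathbf{p}$ of $k$, $P_j = p_1 + \cdots + p_j$, and $I_j = i_{P_{j-1}+1} + \cdots + i_{P_j}$. -/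
/-- The contracted exponent `I_j = i_{P_{j-1}+1} + ⋯ + i_{P_j}` of the block `j`
of the composition `l`, where the exponents are `i 0, i 1, …` (zero-indexed). -/
def blockExp (l : List ℕ) (i : ℕ → ℕ) (j : Fin l.length) : ℕ :=
  ∑ m ∈ Finset.Ico ((l.take j).sum) ((l.take (j + 1)).sum), i m

namespace MultiInterpolatedZeta

theorem tsum_ite_eq_tsum_subtype {β M : Type*} [AddCommMonoid M] [TopologicalSpace M]
    (P : β → Prop) [DecidablePred P] (F : β → M) :
    (∑' x, if P x then F x else 0) = ∑' x : {x // P x}, F x := by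
  calc _ = ∑' x, {x | P x}.indicator F x := tsum_congr fun x => by by_cases h : P x <;> simp [h]
    _ = _ := (tsum_subtype {x | P x} F).symm

theorem map_fst_zip_ofFn {β γ : Type*} (l : List β) (g : Fin l.length → γ) :
    ((List.ofFn g).zip l).map Prod.fst = List.ofFn g :=
  List.map_fst_zip (by simp)

theorem map_snd_zip_ofFn {β γ : Type*} (l : List β) (g : Fin l.length → γ) :
    ((List.ofFn g).zip l).map Prod.snd = l :=
  List.map_snd_zip (by simp)

section RunLength

variable {α : Type*}

def expandRuns (rs : List (α × ℕ)) : List α := rs.flatMap fun p => List.replicate p.2 p.1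

@[simp]
theorem expandRuns_cons (a : α) (n : ℕ) (rs : List (α × ℕ)) :
    expandRuns ((a, n) :: rs) = List.replicate n a ++ expandRuns rs := rfl

theorem length_expandRuns (rs : List (α × ℕ)) :
    (expandRuns rs).length = (rs.map Prod.snd).sum := by
  simp [expandRuns, List.length_flatMap]

theorem head?_expandRuns {rs : List (α × ℕ)} (hpos : ∀ p ∈ rs, 0 < p.2) :
    (expandRuns rs).head? = (rs.map Prod.fst).head? := by
  obtain _ | ⟨⟨a, n⟩, rs⟩ := rs
  · rfl
  · obtain ⟨m, rfl⟩ := Nat.exists_eq_add_one.2 (hpos (a, n) List.mem_cons_self)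
    simp [List.replicate_succ]

theorem pairwise_expandRuns {R : α → α → Prop} [Std.Refl R] {rs : List (α × ℕ)}
    (h : (rs.map Prod.fst).Pairwise R) : (expandRuns rs).Pairwise R := by
  refine List.pairwise_flatMap.2 ⟨fun _ _ => List.pairwise_replicate_of_refl, ?_⟩
  refine (List.pairwise_map.1 h).imp fun hpq x hx y hy => ?_
  rwa [List.eq_of_mem_replicate hx, List.eq_of_mem_replicate hy]

theorem forall_mem_expandRuns {P : α → Prop} {rs : List (α × ℕ)}
    (h : ∀ p ∈ rs, P p.1) : ∀ a ∈ expandRuns rs, P a := by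
  simp only [expandRuns, List.mem_flatMap, List.mem_replicate]
  rintro a ⟨p, hp, -, rfl⟩
  exact h p hp

variable [DecidableEq α]

/-- Run-length encoding: each maximal block of equal consecutive entries `a` of length `n`
becomes the pair `(a, n)`. -/
def runs : List α → List (α × ℕ)
  | [] => []
  | a :: l => match runs l with
    | [] => [(a, 1)]
    | (b, n) :: rs => if a = b then (a, n + 1) :: rs else (a, 1) :: (b, n) :: rs

theorem runs_cons (a : α) (l : List α) : runs (a :: l) = match runs l with
    | [] => [(a, 1)]
    | (b, n) :: rs => if a = b then (a, n + 1) :: rs else (a, 1) :: (b, n) :: rs := rfl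

theorem head?_runs (l : List α) : ((runs l).map Prod.fst).head? = l.head? := by
  obtain _ | ⟨a, l⟩ := l
  · rfl
  · rw [runs_cons]
    rcases runs l with _ | ⟨⟨b, n⟩, rs⟩
    · rfl
    · dsimp only
      split <;> rfl

theorem expandRuns_runs : ∀ l : List α, expandRuns (runs l) = l
  | [] => rfl
  | a :: l => by
    have ih := expandRuns_runs l
    rw [runs_cons]
    rcases h : runs l with _ | ⟨⟨b, n⟩, rs⟩ <;> rw [h] at ih
    · simp [← ih]
    · dsimp only
      split_ifs with hab
      · simp [← ih, hab, List.replicate_succ]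
      · simp [← ih]

theorem pos_of_mem_runs : ∀ {l : List α} {p : α × ℕ}, p ∈ runs l → 0 < p.2
  | [], _, hp => by simp [runs] at hp
  | a :: l, p, hp => by
    have ih : ∀ {p : α × ℕ}, p ∈ runs l → 0 < p.2 := pos_of_mem_runs
    rw [runs_cons] at hp
    rcases h : runs l with _ | ⟨⟨b, n⟩, rs⟩ <;> rw [h] at hp ih
    · simp_all
    · dsimp only at hp
      split_ifs at hp <;> rcases List.mem_cons.1 hp with rfl | hp
      · simp
      · exact ih (List.mem_cons_of_mem _ hp)
      · simp
      · exact ih hp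

theorem fst_mem_of_mem_runs {l : List α} {p : α × ℕ} (hp : p ∈ runs l) : p.1 ∈ l := by
  rw [← expandRuns_runs l, expandRuns, List.mem_flatMap]
  exact ⟨p, hp, List.mem_replicate.2 ⟨(pos_of_mem_runs hp).ne', rfl⟩⟩

theorem isChain_runs [PartialOrder α] :
    ∀ {l : List α}, l.IsChain (· ≥ ·) → ((runs l).map Prod.fst).IsChain (· > ·)
  | [], _ => List.IsChain.nil
  | a :: l, hl => by
    obtain ⟨hhead, hl⟩ := List.isChain_cons.1 hl
    have ih := isChain_runs hl
    have hh := head?_runs l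
    rw [runs_cons]
    rcases h : runs l with _ | ⟨⟨b, n⟩, rs⟩ <;> rw [h] at ih hh
    · simp
    · have hba : b ≤ a := hhead b (by simp_all)
      dsimp only
      split_ifs with hab
      · simpa [hab] using ih
      · exact List.isChain_cons_cons.2 ⟨lt_of_le_of_ne hba (Ne.symm hab), ih⟩

theorem runs_replicate_append (a : α) (n : ℕ) {l : List α} (hl : ∀ b ∈ l.head?, a ≠ b) :
    runs (List.replicate (n + 1) a ++ l) = (a, n + 1) :: runs l := by
  induction n with
  | zero =>
    rw [List.replicate_one, List.singleton_append, runs_cons]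
    have hh := head?_runs l
    rcases h : runs l with _ | ⟨⟨b, m⟩, rs⟩
    · rfl
    · rw [h] at hh
      exact if_neg (hl b (by simp_all))
  | succ n ih => rw [List.replicate_succ, List.cons_append, runs_cons, ih]; simp

theorem runs_expandRuns : ∀ {rs : List (α × ℕ)}, (∀ p ∈ rs, 0 < p.2) →
    (rs.map Prod.fst).IsChain (· ≠ ·) → runs (expandRuns rs) = rs
  | [], _, _ => rfl
  | (a, n) :: rs, hpos, hne => by
    have hpos' : ∀ p ∈ rs, 0 < p.2 := fun p hp => hpos p (List.mem_cons_of_mem _ hp)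
    obtain ⟨hhead, hne'⟩ := List.isChain_cons.1 hne
    obtain ⟨m, rfl⟩ := Nat.exists_eq_add_one.2 (hpos (a, n) List.mem_cons_self)
    rw [expandRuns_cons, runs_replicate_append a _ (by rwa [head?_expandRuns hpos']),
      runs_expandRuns hpos' hne']

end RunLength

section Weights

noncomputable def chainWeight (t : ℕ → ℝ) : List ℕ → ℝ
  | a :: b :: l => (if a = b then t b else 1) * chainWeight t (b :: l)
  | _ => 1

/-- `invPowProd i [a₀, a₁, …] = ∏ₘ (aₘ ^ i m)⁻¹`. -/
noncomputable def invPowProd : (ℕ → ℕ) → List ℕ → ℝ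
  | _, [] => 1
  | i, a :: l => ((a : ℝ) ^ i 0)⁻¹ * invPowProd (fun m => i (m + 1)) l

theorem wt_succ_succ (t : ℕ → ℝ) {n : ℕ} (f : Fin (n + 2) → ℕ) :
    wt t f = (if f 0 = f 1 then t (f 1) else 1) * wt t (fun j => f j.succ) := by
  rw [wt, Finset.prod_range_succ', mul_comm, wt]
  congr 1
  simp

theorem wt_eq_chainWeight (t : ℕ → ℝ) :
    ∀ {k : ℕ} (f : Fin k → ℕ), wt t f = chainWeight t (List.ofFn f)
  | 0, _ => by simp [wt, chainWeight]
  | 1, _ => by simp [wt, chainWeight]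
  | n + 2, f => by
    rw [wt_succ_succ, wt_eq_chainWeight t (fun j => f j.succ), List.ofFn_succ (f := f),
      List.ofFn_succ (f := fun j => f j.succ), chainWeight]
    rfl

theorem prod_inv_pow_eq_invPowProd : ∀ {k : ℕ} (f : Fin k → ℕ) (i : ℕ → ℕ),
    ∏ j : Fin k, ((f j : ℝ) ^ i j)⁻¹ = invPowProd i (List.ofFn f)
  | 0, _, _ => by simp [invPowProd]
  | n + 1, f, i => by
    rw [Fin.prod_univ_succ, List.ofFn_succ, invPowProd, ← prod_inv_pow_eq_invPowProd]
    rfl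

theorem chainWeight_replicate_append (t : ℕ → ℝ) (a n : ℕ) {l : List ℕ}
    (hl : ∀ b ∈ l.head?, a ≠ b) :
    chainWeight t (List.replicate (n + 1) a ++ l) = t a ^ n * chainWeight t l := by
  induction n with
  | zero =>
    obtain _ | ⟨b, l⟩ := l
    · simp [chainWeight]
    · simp [chainWeight, hl b rfl]
  | succ n ih =>
    change chainWeight t (a :: a :: (List.replicate n a ++ l)) = _
    rw [chainWeight, if_pos rfl, ← List.cons_append, ← List.replicate_succ, ih, pow_succ]
    ring

theorem invPowProd_replicate_append (a n : ℕ) (l : List ℕ) (i : ℕ → ℕ) :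
    invPowProd i (List.replicate n a ++ l)
      = ((a : ℝ) ^ ∑ m ∈ Finset.range n, i m)⁻¹ * invPowProd (fun m => i (m + n)) l := by
  induction n generalizing i with
  | zero => simp
  | succ n ih =>
    rw [List.replicate_succ, List.cons_append, invPowProd, ih, Finset.sum_range_succ', pow_add,
      mul_inv, ← mul_assoc, mul_comm ((_ : ℝ) ^ i 0)⁻¹]
    simp only [Nat.add_assoc]

theorem blockExp_cons_zero (n : ℕ) (c : List ℕ) (i : ℕ → ℕ) :
    blockExp (n :: c) i 0 = ∑ m ∈ Finset.range n, i m := by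
  rw [Finset.range_eq_Ico]
  rfl

theorem blockExp_cons_succ (n : ℕ) (c : List ℕ) (i : ℕ → ℕ) (j : Fin c.length) :
    blockExp (n :: c) i j.succ = blockExp c (fun m => i (m + n)) j := by
  simp only [blockExp, Fin.val_succ, List.take_succ_cons, List.sum_cons, Finset.sum_Ico_add',
    add_comm n]

theorem chainWeight_mul_invPowProd_expandRuns (t : ℕ → ℝ) : ∀ (c : List ℕ)
    (g : Fin c.length → ℕ) (i : ℕ → ℕ), (∀ n ∈ c, 0 < n) → (List.ofFn g).IsChain (· ≠ ·) →
    chainWeight t (expandRuns ((List.ofFn g).zip c))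
        * invPowProd i (expandRuns ((List.ofFn g).zip c))
      = ∏ j, t (g j) ^ (c.get j - 1) * ((g j : ℝ) ^ blockExp c i j)⁻¹
  | [], _, _, _, _ => by simp [expandRuns, chainWeight, invPowProd]
  | n :: c, g, i, hc, hg => by
    obtain ⟨m, rfl⟩ := Nat.exists_eq_add_one.2 (hc n List.mem_cons_self)
    have hc' : ∀ n ∈ c, 0 < n := fun n hn => hc n (List.mem_cons_of_mem _ hn)
    have hpos : ∀ p ∈ (List.ofFn fun j => g j.succ).zip c, 0 < p.2 :=
      fun p hp => hc' _ (List.of_mem_zip hp).2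
    rw [List.ofFn_succ, List.isChain_cons] at hg
    have hhead : ∀ b ∈ (expandRuns ((List.ofFn fun j => g j.succ).zip c)).head?, g 0 ≠ b := by
      rw [head?_expandRuns hpos, map_fst_zip_ofFn]
      exact hg.1
    have ih := chainWeight_mul_invPowProd_expandRuns t c _ (fun l => i (l + (m + 1))) hc' hg.2
    rw [List.ofFn_succ, List.zip_cons_cons, expandRuns_cons,
      chainWeight_replicate_append t _ _ hhead, invPowProd_replicate_append]
    change _ = ∏ j : Fin (c.length + 1), _
    simp only [Fin.prod_univ_succ, blockExp_cons_zero, blockExp_cons_succ, List.get_eq_getElem,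
      Fin.val_succ, List.getElem_cons_succ] at ih ⊢
    rw [← ih]
    simp only [Fin.val_zero, List.getElem_cons_zero, Nat.add_sub_cancel]
    ring

end Weights

section Summability

theorem summable_prod_pi {β : Type*} {f : β → ℝ} (hf : Summable f) (hf0 : 0 ≤ f) :
    ∀ k : ℕ, Summable fun x : Fin k → β => ∏ j, f (x j)
  | 0 => Summable.of_finite
  | k + 1 => by
    refine (Fin.consEquiv fun _ => β).summable_iff.1 ?_
    refine (hf.mul_of_nonneg (summable_prod_pi hf hf0 k) hf0
      fun _ => Finset.prod_nonneg fun _ _ => hf0 _).congr fun x => ?_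
    simp [Fin.prod_univ_succ, Fin.consEquiv]

theorem prod_inv_pow_le {n : ℕ} {x : Fin (n + 1) → ℝ} (hx : ∀ j, 1 ≤ x j) {i : ℕ → ℕ}
    (hi0 : 2 ≤ i 0) (hi : ∀ m < n + 1, 1 ≤ i m) :
    ∏ j, (x j ^ i j)⁻¹ ≤ (x 0)⁻¹ * ∏ j, (x j)⁻¹ := by
  calc ∏ j, (x j ^ i j)⁻¹ = (x 0 ^ i 0)⁻¹ * ∏ j : Fin n, (x j.succ ^ i (j + 1))⁻¹ :=
        Fin.prod_univ_succ _
    _ ≤ (x 0 ^ 2)⁻¹ * ∏ j : Fin n, (x j.succ ^ 1)⁻¹ := by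
        have hx0 (j) : 0 ≤ x j := zero_le_one.trans (hx j)
        have hpow (j) (e : ℕ) : 0 ≤ (x j ^ e)⁻¹ := inv_nonneg.2 (pow_nonneg (hx0 j) e)
        exact mul_le_mul (inv_pow_le_inv_pow_of_le (hx 0) hi0)
          (Finset.prod_le_prod (fun j _ => hpow _ _)
            fun j _ => inv_pow_le_inv_pow_of_le (hx _) (hi _ (by omega)))
          (Finset.prod_nonneg fun j _ => hpow _ _) (hpow _ _)
    _ = (x 0)⁻¹ * ∏ j, (x j)⁻¹ := by
        rw [Fin.prod_univ_succ]
        simp only [pow_one, sq, mul_inv, mul_assoc]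

theorem inv_le_prod_rpow {n : ℕ} {x : Fin (n + 1) → ℝ} (hx : ∀ j, 0 < x j) (hanti : Antitone x) :
    (x 0)⁻¹ ≤ ∏ j, x j ^ (-((n : ℝ) + 1)⁻¹) := by
  calc (x 0)⁻¹ = ∏ _j : Fin (n + 1), x 0 ^ (-((n : ℝ) + 1)⁻¹) := by
        rw [Finset.prod_const, Finset.card_univ, Fintype.card_fin, ← Real.rpow_natCast,
          ← Real.rpow_mul (hx 0).le, ← Real.rpow_neg_one]
        congr 1
        field_simp
        push_cast
        ring
    _ ≤ ∏ j, x j ^ (-((n : ℝ) + 1)⁻¹) :=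
        Finset.prod_le_prod (fun _ _ => Real.rpow_nonneg (hx 0).le _) fun j _ =>
          Real.rpow_le_rpow_of_nonpos (hx j) (hanti (Fin.zero_le j)) (neg_nonpos.2 (by positivity))

theorem prod_inv_pow_le_prod_rpow {n : ℕ} {x : Fin (n + 1) → ℝ} (hx : ∀ j, 1 ≤ x j)
    (hanti : Antitone x) {i : ℕ → ℕ} (hi0 : 2 ≤ i 0) (hi : ∀ m < n + 1, 1 ≤ i m) :
    ∏ j, (x j ^ i j)⁻¹ ≤ ∏ j, x j ^ (-(1 + ((n : ℝ) + 1)⁻¹)) := by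
  have hx0 (j) : 0 < x j := zero_lt_one.trans_le (hx j)
  calc ∏ j, (x j ^ i j)⁻¹ ≤ (x 0)⁻¹ * ∏ j, (x j)⁻¹ := prod_inv_pow_le hx hi0 hi
    _ ≤ (∏ j, x j ^ (-((n : ℝ) + 1)⁻¹)) * ∏ j, (x j)⁻¹ :=
        mul_le_mul_of_nonneg_right (inv_le_prod_rpow hx0 hanti)
          (Finset.prod_nonneg fun j _ => (inv_pos.2 (hx0 j)).le)
    _ = ∏ j, x j ^ (-(1 + ((n : ℝ) + 1)⁻¹)) := by
        rw [← Finset.prod_mul_distrib]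
        refine Finset.prod_congr rfl fun j _ => ?_
        rw [← Real.rpow_neg_one (x j), ← Real.rpow_add (hx0 j)]
        ring_nf

theorem abs_wt_le_one {t : ℕ → ℝ} (ht : ∀ m, |t m| ≤ 1) {k : ℕ} (f : Fin k → ℕ) :
    |wt t f| ≤ 1 := by
  rw [wt, Finset.abs_prod]
  refine Finset.prod_le_one (fun _ _ => abs_nonneg _) fun r _ => ?_
  split_ifs <;> simp [ht]

end Summability

abbrev Compositions (k : ℕ) := {l : List ℕ // l.sum = k ∧ ∀ p ∈ l, 0 < p}

abbrev PosAntitoneTuple (k : ℕ) := {f : Fin k → ℕ // (∀ j, 1 ≤ f j) ∧ Antitone f}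

abbrev PosStrictAntiTuple (r : ℕ) := {g : Fin r → ℕ // (∀ j, 1 ≤ g j) ∧ StrictAnti g}

theorem summable_wt_mul_prod_inv_pow {k : ℕ} {i : ℕ → ℕ} (hi0 : 2 ≤ i 0)
    (hi : ∀ m < k, 1 ≤ i m) {t : ℕ → ℝ} (ht : ∀ m, |t m| ≤ 1) :
    Summable fun f : PosAntitoneTuple k => wt t f.1 * ∏ j, ((f.1 j : ℝ) ^ i j)⁻¹ := by
  obtain _ | n := k
  · exact Summable.of_finite
  have hp : -(1 + ((n : ℝ) + 1)⁻¹) < -1 := by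
    have : (0 : ℝ) < ((n : ℝ) + 1)⁻¹ := by positivity
    linarith
  refine Summable.of_norm_bounded ((summable_prod_pi (Real.summable_nat_rpow.2 hp)
    (fun _ => by positivity) _).subtype _) fun f => ?_
  have hprod : 0 ≤ ∏ j, ((f.1 j : ℝ) ^ i j)⁻¹ := by positivity
  rw [Real.norm_eq_abs, abs_mul, abs_of_nonneg hprod]
  exact (mul_le_of_le_one_left hprod (abs_wt_le_one ht f.1)).trans
    (prod_inv_pow_le_prod_rpow (fun j => Nat.one_le_cast.2 (f.2.1 j))
      (Nat.mono_cast.comp_antitone f.2.2) hi0 hi)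

theorem isChain_ne_ofFn {r : ℕ} {g : Fin r → ℕ} (hg : StrictAnti g) :
    (List.ofFn g).IsChain (· ≠ ·) :=
  (List.sortedGT_iff_isChain.1 (List.sortedGT_ofFn_iff.2 hg)).imp fun _ _ h => h.ne'

section Bijection

variable {k : ℕ}

theorem length_expandRuns_zip (c : Compositions k) (g : Fin c.1.length → ℕ) :
    (expandRuns ((List.ofFn g).zip c.1)).length = k := by
  rw [length_expandRuns, map_snd_zip_ofFn, c.2.1]

def expandTuple (c : Compositions k) (g : Fin c.1.length → ℕ) : Fin k → ℕ :=
  fun m => (expandRuns ((List.ofFn g).zip c.1))[m.1]'(by rw [length_expandRuns_zip]; exact m.2)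

theorem ofFn_expandTuple (c : Compositions k) (g : Fin c.1.length → ℕ) :
    List.ofFn (expandTuple c g) = expandRuns ((List.ofFn g).zip c.1) :=
  List.ext_getElem (by simp [length_expandRuns_zip]) fun _ _ _ => by simp [expandTuple]

theorem runs_expandRuns_zip (c : Compositions k) {g : Fin c.1.length → ℕ} (hg : StrictAnti g) :
    runs (expandRuns ((List.ofFn g).zip c.1)) = (List.ofFn g).zip c.1 :=
  runs_expandRuns (fun _ hp => c.2.2 _ (List.of_mem_zip hp).2)
    (by rw [map_fst_zip_ofFn]; exact isChain_ne_ofFn hg)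

theorem one_le_expandTuple (c : Compositions k) {g : Fin c.1.length → ℕ} (hg : ∀ j, 1 ≤ g j)
    (m : Fin k) : 1 ≤ expandTuple c g m := by
  refine List.forall_mem_ofFn_iff.1 ?_ m
  rw [ofFn_expandTuple]
  exact forall_mem_expandRuns fun _ hp => List.forall_mem_ofFn_iff.2 hg _ (List.of_mem_zip hp).1

theorem antitone_expandTuple (c : Compositions k) {g : Fin c.1.length → ℕ} (hg : Antitone g) :
    Antitone (expandTuple c g) := by
  rw [← List.sortedGE_ofFn_iff, List.sortedGE_iff_pairwise, ofFn_expandTuple]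
  apply pairwise_expandRuns
  rwa [map_fst_zip_ofFn, ← List.sortedGE_iff_pairwise, List.sortedGE_ofFn_iff]

def toPosAntitone (s : Σ c : Compositions k, PosStrictAntiTuple c.1.length) :
    PosAntitoneTuple k :=
  ⟨expandTuple s.1 s.2.1, one_le_expandTuple s.1 s.2.2.1, antitone_expandTuple s.1 s.2.2.2.antitone⟩

theorem toPosAntitone_injective : Function.Injective (toPosAntitone (k := k)) := by
  rintro ⟨c₁, g₁, hg₁⟩ ⟨c₂, g₂, hg₂⟩ h
  have hzip : (List.ofFn g₁).zip c₁.1 = (List.ofFn g₂).zip c₂.1 := by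
    have := congrArg (fun f : PosAntitoneTuple k => runs (List.ofFn f.1)) h
    simpa only [toPosAntitone, ofFn_expandTuple, runs_expandRuns_zip _ hg₁.2,
      runs_expandRuns_zip _ hg₂.2] using this
  obtain rfl : c₁ = c₂ :=
    Subtype.ext (by rw [← map_snd_zip_ofFn c₁.1 g₁, hzip, map_snd_zip_ofFn])
  obtain rfl : g₁ = g₂ :=
    List.ofFn_injective (by rw [← map_fst_zip_ofFn c₁.1 g₁, hzip, map_fst_zip_ofFn])
  rfl

theorem toPosAntitone_surjective : Function.Surjective (toPosAntitone (k := k)) := by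
  rintro ⟨f, hf, hanti⟩
  set rs := runs (List.ofFn f)
  let c : Compositions k :=
    ⟨rs.map Prod.snd, by rw [← length_expandRuns, expandRuns_runs, List.length_ofFn],
      by simpa using fun _ _ hp => pos_of_mem_runs hp⟩
  let g : Fin c.1.length → ℕ := fun j => (rs.map Prod.fst)[j.1]'(by simpa [c] using j.2)
  have hg : List.ofFn g = rs.map Prod.fst :=
    List.ext_getElem (by simp [c]) fun _ _ _ => by simp [g]
  have hzip : (List.ofFn g).zip c.1 = rs := by
    rw [hg]
    exact (List.zip_of_prod rfl rfl).symm
  refine ⟨⟨c, g, fun j => ?_, ?_⟩, Subtype.ext (List.ofFn_injective ?_)⟩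
  · obtain ⟨p, hp, hpj⟩ := List.mem_map.1 (hg ▸ List.mem_ofFn.2 ⟨j, rfl⟩ : g j ∈ rs.map Prod.fst)
    exact hpj ▸ List.forall_mem_ofFn_iff.2 hf _ (fst_mem_of_mem_runs hp)
  · rw [← List.sortedGT_ofFn_iff, List.sortedGT_iff_isChain, hg]
    exact isChain_runs (List.sortedGE_iff_isChain.1 (List.sortedGE_ofFn_iff.2 hanti))
  · simp only [toPosAntitone, ofFn_expandTuple, hzip, rs, expandRuns_runs]

noncomputable def blocksEquiv :
    (Σ c : Compositions k, PosStrictAntiTuple c.1.length) ≃ PosAntitoneTuple k :=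
  Equiv.ofBijective _ ⟨toPosAntitone_injective, toPosAntitone_surjective⟩

theorem wt_mul_prod_inv_pow_expandTuple (t : ℕ → ℝ) (i : ℕ → ℕ) (c : Compositions k)
    {g : Fin c.1.length → ℕ} (hg : StrictAnti g) :
    wt t (expandTuple c g) * ∏ j, ((expandTuple c g j : ℝ) ^ i j)⁻¹
      = ∏ j, t (g j) ^ (c.1.get j - 1) * ((g j : ℝ) ^ blockExp c.1 i j)⁻¹ := by
  rw [wt_eq_chainWeight, prod_inv_pow_eq_invPowProd, ofFn_expandTuple]
  exact chainWeight_mul_invPowProd_expandRuns t c.1 g i c.2.2 (isChain_ne_ofFn hg)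

end Bijection

end MultiInterpolatedZeta

open MultiInterpolatedZeta

theorem multi_interpolated_composition_representation_general
    (k : ℕ) (i : ℕ → ℕ) (hi0 : 2 ≤ i 0) (hi : ∀ m < k, 1 ≤ i m)
    (t : ℕ → ℝ) (ht : ∀ m, |t m| ≤ 1) :
    (∑' f : Fin k → ℕ,
        if (∀ j, 1 ≤ f j) ∧ (∀ a b : Fin k, a ≤ b → f b ≤ f a) then
          wt t f * ∏ j : Fin k, ((f j : ℝ) ^ i (j : ℕ))⁻¹
        else 0)
      = ∑' c : {l : List ℕ // l.sum = k ∧ ∀ p ∈ l, 0 < p},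
          ∑' g : Fin c.1.length → ℕ,
            if (∀ j, 1 ≤ g j) ∧ (∀ a b : Fin c.1.length, a < b → g b < g a) then
              ∏ j : Fin c.1.length,
                t (g j) ^ (c.1.get j - 1) * ((g j : ℝ) ^ blockExp c.1 i j)⁻¹
            else 0 := by
  let F (f : PosAntitoneTuple k) : ℝ := wt t f.1 * ∏ j, ((f.1 j : ℝ) ^ i j)⁻¹
  calc _ = ∑' f, F f := tsum_ite_eq_tsum_subtype _ _
    _ = ∑' s, F (blocksEquiv s) := (blocksEquiv.tsum_eq F).symm
    _ = ∑' (c : Compositions k) (g : PosStrictAntiTuple c.1.length), F (blocksEquiv ⟨c, g⟩) :=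
        (blocksEquiv.summable_iff.2 (summable_wt_mul_prod_inv_pow hi0 hi ht)).tsum_sigma
    _ = _ := tsum_congr fun c => by
        rw [tsum_ite_eq_tsum_subtype]
        exact tsum_congr fun g => wt_mul_prod_inv_pow_expandTuple t i c g.2.2

/-- Representation of multi-interpolated MZVs via compositions:
`ζ^t(i₁,…,i_k) = ∑_{p ∈ 𝒫(k)} ∑_{ℓ₁ > ⋯ > ℓ_r ≥ 1} ∏_j t_{ℓ_j}^{p_j-1} ℓ_j^{-I_j}`. -/
theorem multi_interpolated_composition_representation
    (k : ℕ) (hk : 1 ≤ k) (i : ℕ → ℕ) (hi0 : 2 ≤ i 0) (hi : ∀ m < k, 1 ≤ i m)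
    (t : ℕ → ℝ) (ht : ∀ m, |t m| ≤ 1) :
    (∑' f : Fin k → ℕ,
        if (∀ j, 1 ≤ f j) ∧ (∀ a b : Fin k, a ≤ b → f b ≤ f a) then
          wt t f * ∏ j : Fin k, ((f j : ℝ) ^ i (j : ℕ))⁻¹
        else 0)
      = ∑' c : {l : List ℕ // l.sum = k ∧ ∀ p ∈ l, 0 < p},
          ∑' g : Fin c.1.length → ℕ,
            if (∀ j, 1 ≤ g j) ∧ (∀ a b : Fin c.1.length, a < b → g b < g a) then
              ∏ j : Fin c.1.length,
                t (g j) ^ (c.1.get j - 1) * ((g j : ℝ) ^ blockExp c.1 i j)⁻¹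
            else 0 :=
  multi_interpolated_composition_representation_general k i hi0 hi t ht
end

section
/- For integers $i \ge 2$, $j \ge 2$, $k \ge 1$, and any sequence $(t_\ell)$ with $t_\ell \in [-1,1]$: $\zeta(i) \cdot \zeta^{\vec{t}}(j,k) = \zeta(i,j,k) + \zeta(i+j,k) + \zeta(j,i,k) + \zeta(j,i+k) + \zeta(j,k,i) + \sum_{\ell_1 > \ell \ge 1} \frac{t_\ell}{\ell_1^{i} \ell^{j+k}} + \sum_{\ell \ge 1} \frac{t_\ell}{\ell^{i+j+k}} + \sum_{\ell > \ell_2 \ge 1} \frac{t_\ell}{\ell^{j+k} \ell_2^{i}}$. -/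
/-!
Both sides are absolutely convergent, so the product of the two series is the sum over pairs
`(ℓ, m)` of indices, and the stuffle relation is the bookkeeping of where `ℓ` falls relative to
the strictly decreasing indices of `m`: each strict interval contributes a depth-three term and
each coincidence a depth-two term with merged exponents. The weighted part `∑ tₗ ℓ^{-(j+k)}` is a
single series, handled the same way at depth one. Convergence of `ζ(j, k)` for `k = 1` comes from
`ℓ₁^{-2} ℓ₂^{-1} ≤ (ℓ₁ ℓ₂)^{-3/2}` for `ℓ₂ ≤ ℓ₁`.
-/

open Function Set

lemma summable_norm_ite {α E : Type*} [SeminormedAddCommGroup E] {f : α → E}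
    (hf : Summable fun a => ‖f a‖) (p : α → Prop) [DecidablePred p] :
    Summable fun a => ‖if p a then f a else 0‖ :=
  hf.of_nonneg_of_le (fun _ => norm_nonneg _) fun a => by split_ifs <;> simp

lemma tsum_indicator_eq_tsum_of_comp {α β M : Type*} [AddCommMonoid M] [TopologicalSpace M]
    {s : Set α} {F : α → M} {G : β → M} (e : β → α) (he : Injective e) (hs : s ⊆ range e)
    (hG : ∀ b, s.indicator F (e b) = G b) :
    ∑' a, s.indicator F a = ∑' b, G b := by
  rw [← he.tsum_eq (support_indicator_subset.trans hs)]
  exact tsum_congr hG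

namespace NestedSum

variable {R : Type*} [NormedCommRing R] [CompleteSpace R]

/- Multiple zeta series with coefficient sequences in place of the powers `ℓ^{-a}`:
`ζ(a, b) = depth2 (fun ℓ => (ℓ ^ a)⁻¹) (fun ℓ => (ℓ ^ b)⁻¹)`. -/
noncomputable def depth1 (f : ℕ → R) : R := ∑' n, if 1 ≤ n then f n else 0

noncomputable def depth2 (f g : ℕ → R) : R :=
  ∑' p : ℕ × ℕ, if 1 ≤ p.2 ∧ p.2 < p.1 then f p.1 * g p.2 else 0

noncomputable def depth3 (f g h : ℕ → R) : R :=
  ∑' p : ℕ × ℕ × ℕ, if 1 ≤ p.2.2 ∧ p.2.2 < p.2.1 ∧ p.2.1 < p.1 then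
    f p.1 * g p.2.1 * h p.2.2 else 0

theorem depth1_mul_depth1 {f g : ℕ → R} (hf : Summable fun n => ‖f n‖)
    (hg : Summable fun n => ‖g n‖) :
    depth1 f * depth1 g = depth2 f g + depth1 (f * g) + depth2 g f := by
  have hf' := summable_norm_ite hf (1 ≤ ·)
  have hg' := summable_norm_ite hg (1 ≤ ·)
  let F : ℕ × ℕ → R := fun q => (if 1 ≤ q.1 then f q.1 else 0) * (if 1 ≤ q.2 then g q.2 else 0)
  have hS := (summable_mul_of_summable_norm (f := fun n => if 1 ≤ n then f n else 0)
    (g := fun n => if 1 ≤ n then g n else 0) hf' hg').indicator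
  have hsplit : ∀ q, F q = {q | q.2 < q.1}.indicator F q + {q | q.1 = q.2}.indicator F q
      + {q | q.1 < q.2}.indicator F q := by
    intro q
    simp only [F, indicator_apply, mem_ofPred_eq]
    split_ifs <;> first | omega | simp
  rw [depth1, depth1, tsum_mul_tsum_of_summable_norm hf' hg', tsum_congr hsplit,
    Summable.tsum_add ((hS _).add (hS _)) (hS _), Summable.tsum_add (hS _) (hS _)]
  congr 1; congr 1
  · exact tsum_congr fun q => by
      simp only [indicator_apply, mem_ofPred_eq]; split_ifs <;> first | omega | simp
  · exact tsum_indicator_eq_tsum_of_comp (fun n => (n, n)) (fun a b h => congrArg Prod.fst h)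
      (fun q hq => ⟨q.1, Prod.ext rfl hq⟩) fun n => by
        simp only [indicator_apply, mem_ofPred_eq, Pi.mul_apply]
        split_ifs <;> first | omega | simp
  · exact tsum_indicator_eq_tsum_of_comp Prod.swap Prod.swap_injective
      (fun q _ => ⟨q.swap, q.swap_swap⟩) fun q => by
        simp only [indicator_apply, mem_ofPred_eq, Prod.fst_swap, Prod.snd_swap]
        split_ifs <;> first | omega | ring

theorem depth1_mul_depth2 {f g h : ℕ → R} (hf : Summable fun n => ‖f n‖)
    (hgh : Summable fun p : ℕ × ℕ => ‖if 1 ≤ p.2 ∧ p.2 < p.1 then g p.1 * h p.2 else 0‖) :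
    depth1 f * depth2 g h = depth3 f g h + depth2 (f * g) h + depth3 g f h + depth2 g (f * h)
      + depth3 g h f := by
  have hf' := summable_norm_ite hf (1 ≤ ·)
  let F : ℕ × ℕ × ℕ → R := fun q =>
    (if 1 ≤ q.1 then f q.1 else 0) * (if 1 ≤ q.2.2 ∧ q.2.2 < q.2.1 then g q.2.1 * h q.2.2 else 0)
  have hS := (summable_mul_of_summable_norm (f := fun n => if 1 ≤ n then f n else 0)
    (g := fun p : ℕ × ℕ => if 1 ≤ p.2 ∧ p.2 < p.1 then g p.1 * h p.2 else 0) hf' hgh).indicator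
  have hsplit : ∀ q, F q = {q | q.2.1 < q.1}.indicator F q + {q | q.1 = q.2.1}.indicator F q
      + {q | q.2.2 < q.1 ∧ q.1 < q.2.1}.indicator F q + {q | q.1 = q.2.2}.indicator F q
      + {q | q.1 < q.2.2}.indicator F q := by
    intro q
    simp only [F, indicator_apply, mem_ofPred_eq]
    split_ifs <;> first | omega | simp
  rw [depth1, depth2, tsum_mul_tsum_of_summable_norm hf' hgh, tsum_congr hsplit,
    Summable.tsum_add ((((hS _).add (hS _)).add (hS _)).add (hS _)) (hS _),
    Summable.tsum_add (((hS _).add (hS _)).add (hS _)) (hS _),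
    Summable.tsum_add ((hS _).add (hS _)) (hS _), Summable.tsum_add (hS _) (hS _)]
  congr 1; congr 1; congr 1; congr 1
  · exact tsum_congr fun q => by
      simp only [indicator_apply, mem_ofPred_eq]; split_ifs <;> first | omega | ring
  · exact tsum_indicator_eq_tsum_of_comp (fun p => (p.1, p)) (fun a b h => congrArg Prod.snd h)
      (fun q hq => ⟨q.2, Prod.ext hq.symm rfl⟩) fun p => by
        simp only [indicator_apply, mem_ofPred_eq, Pi.mul_apply]
        split_ifs <;> first | omega | ring
  · exact tsum_indicator_eq_tsum_of_comp (fun q => (q.2.1, q.1, q.2.2))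
      (fun a b h => by simp_all [Prod.ext_iff]) (fun q _ => ⟨(q.2.1, q.1, q.2.2), rfl⟩) fun q => by
        simp only [indicator_apply, mem_ofPred_eq]; split_ifs <;> first | omega | ring
  · exact tsum_indicator_eq_tsum_of_comp (fun p => (p.2, p)) (fun a b h => congrArg Prod.snd h)
      (fun q hq => ⟨q.2, Prod.ext hq.symm rfl⟩) fun p => by
        simp only [indicator_apply, mem_ofPred_eq, Pi.mul_apply]
        split_ifs <;> first | omega | ring
  · exact tsum_indicator_eq_tsum_of_comp (fun q => (q.2.2, q.1, q.2.1))
      (fun a b h => by simp_all [Prod.ext_iff]) (fun q _ => ⟨(q.2.1, q.2.2, q.1), rfl⟩) fun q => by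
        simp only [indicator_apply, mem_ofPred_eq]; split_ifs <;> first | omega | ring

end NestedSum

open NestedSum

lemma summable_norm_inv_pow {e : ℕ} (he : 2 ≤ e) : Summable fun n : ℕ => ‖((n : ℝ) ^ e)⁻¹‖ :=
  summable_norm_iff.mpr (Real.summable_nat_pow_inv.mpr (by omega))

lemma mul_rpow_three_halves_le {x y : ℝ} (hy : 0 ≤ y) (hyx : y ≤ x) :
    (x * y) ^ (3 / 2 : ℝ) ≤ x ^ 2 * y := by
  have hxy : 0 ≤ x * y := mul_nonneg (hy.trans hyx) hy
  calc (x * y) ^ (3 / 2 : ℝ) = x * y * √(x * y) := by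
        rw [show (3 / 2 : ℝ) = 1 + 1 / 2 by norm_num, Real.rpow_add' hxy (by norm_num),
          Real.rpow_one, Real.sqrt_eq_rpow]
    _ ≤ x * y * x := by
        gcongr
        exact Real.sqrt_le_iff.mpr ⟨hy.trans hyx, by nlinarith⟩
    _ = x ^ 2 * y := by ring

lemma summable_norm_depth2_inv_pow {j k : ℕ} (hj : 2 ≤ j) (hk : 1 ≤ k) :
    Summable fun p : ℕ × ℕ =>
      ‖if 1 ≤ p.2 ∧ p.2 < p.1 then ((p.1 : ℝ) ^ j)⁻¹ * ((p.2 : ℝ) ^ k)⁻¹ else 0‖ := by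
  have h32 : Summable fun n : ℕ => ((n : ℝ) ^ (3 / 2 : ℝ))⁻¹ :=
    Real.summable_nat_rpow_inv.mpr (by norm_num)
  refine summable_norm_iff.mpr <| (h32.mul_of_nonneg h32 (fun _ => by positivity)
    (fun _ => by positivity)).of_nonneg_of_le (fun p => by split_ifs <;> positivity) fun p => ?_
  split_ifs with hp
  · have hy1 : (1 : ℝ) ≤ p.2 := by exact_mod_cast hp.1
    have hyx : (p.2 : ℝ) ≤ p.1 := by exact_mod_cast hp.2.le
    rw [← mul_inv, ← mul_inv, ← Real.mul_rpow (by positivity) (by positivity)]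
    refine inv_anti₀ (Real.rpow_pos_of_pos (mul_pos (by linarith) (by linarith)) _) ?_
    calc ((p.1 : ℝ) * p.2) ^ (3 / 2 : ℝ) ≤ (p.1 : ℝ) ^ 2 * p.2 :=
          mul_rpow_three_halves_le (by positivity) hyx
      _ ≤ (p.1 : ℝ) ^ j * (p.2 : ℝ) ^ k := by
          gcongr
          · exact hy1.trans hyx
          · exact le_self_pow₀ hy1 (by omega)
  · positivity

/-- Depth-1 × depth-2 multi-interpolated stuffle relation. -/
theorem multi_interpolated_stuffle_depth_one_two
    (i j k : ℕ) (hi : 2 ≤ i) (hj : 2 ≤ j) (hk : 1 ≤ k)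
    (t : ℕ → ℝ) (ht : ∀ ℓ, |t ℓ| ≤ 1) :
    (∑' ℓ : ℕ, if 1 ≤ ℓ then ((ℓ : ℝ) ^ i)⁻¹ else 0)
        * ((∑' p : ℕ × ℕ, if 1 ≤ p.2 ∧ p.2 < p.1 then
              ((p.1 : ℝ) ^ j * (p.2 : ℝ) ^ k)⁻¹ else 0)
            + ∑' ℓ : ℕ, if 1 ≤ ℓ then t ℓ * ((ℓ : ℝ) ^ (j + k))⁻¹ else 0)
      = (∑' p : ℕ × ℕ × ℕ, if 1 ≤ p.2.2 ∧ p.2.2 < p.2.1 ∧ p.2.1 < p.1 then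
            ((p.1 : ℝ) ^ i * (p.2.1 : ℝ) ^ j * (p.2.2 : ℝ) ^ k)⁻¹ else 0)
        + (∑' p : ℕ × ℕ, if 1 ≤ p.2 ∧ p.2 < p.1 then
            ((p.1 : ℝ) ^ (i + j) * (p.2 : ℝ) ^ k)⁻¹ else 0)
        + (∑' p : ℕ × ℕ × ℕ, if 1 ≤ p.2.2 ∧ p.2.2 < p.2.1 ∧ p.2.1 < p.1 then
            ((p.1 : ℝ) ^ j * (p.2.1 : ℝ) ^ i * (p.2.2 : ℝ) ^ k)⁻¹ else 0)
        + (∑' p : ℕ × ℕ, if 1 ≤ p.2 ∧ p.2 < p.1 then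
            ((p.1 : ℝ) ^ j * (p.2 : ℝ) ^ (i + k))⁻¹ else 0)
        + (∑' p : ℕ × ℕ × ℕ, if 1 ≤ p.2.2 ∧ p.2.2 < p.2.1 ∧ p.2.1 < p.1 then
            ((p.1 : ℝ) ^ j * (p.2.1 : ℝ) ^ k * (p.2.2 : ℝ) ^ i)⁻¹ else 0)
        + (∑' p : ℕ × ℕ, if 1 ≤ p.2 ∧ p.2 < p.1 then
            t p.2 * ((p.1 : ℝ) ^ i * (p.2 : ℝ) ^ (j + k))⁻¹ else 0)
        + (∑' ℓ : ℕ, if 1 ≤ ℓ then t ℓ * ((ℓ : ℝ) ^ (i + j + k))⁻¹ else 0)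
        + (∑' p : ℕ × ℕ, if 1 ≤ p.2 ∧ p.2 < p.1 then
            t p.1 * ((p.1 : ℝ) ^ (j + k) * (p.2 : ℝ) ^ i)⁻¹ else 0) := by
  have hu : Summable fun n : ℕ => ‖t n * ((n : ℝ) ^ (j + k))⁻¹‖ :=
    (summable_norm_inv_pow (by omega : 2 ≤ j + k)).of_nonneg_of_le (fun _ => norm_nonneg _)
      fun n => by rw [norm_mul]; exact mul_le_of_le_one_left (norm_nonneg _) (ht n)
  have hζζ := depth1_mul_depth2 (f := fun n => ((n : ℝ) ^ i)⁻¹) (g := fun n => ((n : ℝ) ^ j)⁻¹)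
    (h := fun n => ((n : ℝ) ^ k)⁻¹) (summable_norm_inv_pow hi) (summable_norm_depth2_inv_pow hj hk)
  have hζt := depth1_mul_depth1 (f := fun n => ((n : ℝ) ^ i)⁻¹)
    (g := fun n => t n * ((n : ℝ) ^ (j + k))⁻¹) (summable_norm_inv_pow hi) hu
  -- common normal form of all summands: powers split, products right-nested, `t` in front
  simp only [depth1, depth2, depth3, Pi.mul_apply, mul_inv, pow_add, mul_assoc,
    mul_left_comm (t _)] at hζζ hζt ⊢
  rw [mul_add, hζζ, hζt]
  ring
end

section
/- With the setup of the operator $S^{\vec{t}}$ on words over letters $z_i$ interleaved with powers of formal symbols: for two formal non-commuting symbols $\vec{t}_1, \vec{t}_2$, the operators satisfy $S^{\vec{t}_1 + \vec{t}_2} = S^{\vec{t}_1} \circ S^{\vec{t}_2}$, i.e., for every word $x$, $S^{\vec{t}_1+\vec{t}_2}(x) = S^{\vec{t}_1}(S^{\vec{t}_2}(x))$. -/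
/- A word `t̄₁^{m₁} t̄₂^{k₁} a₁ ⋯ t̄₁^{m_r} t̄₂^{k_r} a_r` (letters interleaved with
powers of two commuting formal symbols, neither commuting with the letters) is
encoded as a list of triples `(m, k, a)`: the letter `z_a` preceded by
`t̄₁^m t̄₂^k`.  The module is `List (ℕ × ℕ × ℕ) →₀ ℚ`. -/

/-- Contraction of a letter `a` into the first letter of a word (passing through
the symbol powers attached to it); contraction into the empty word is `0`. -/
noncomputable def diaWord (a : ℕ) : List (ℕ × ℕ × ℕ) → (List (ℕ × ℕ × ℕ) →₀ ℚ)
  | [] => 0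
  | (m, k, b) :: w => Finsupp.single ((m, k, a + b) :: w) 1

/-- Linear extension of the contraction. -/
noncomputable def diaComb (a : ℕ) (x : List (ℕ × ℕ × ℕ) →₀ ℚ) :
    List (ℕ × ℕ × ℕ) →₀ ℚ :=
  x.sum fun w c => c • diaWord a w

/-- Multiply a word on the left by `t̄₁^{d₁} t̄₂^{d₂}`. -/
def addPre (d₁ d₂ : ℕ) : List (ℕ × ℕ × ℕ) → List (ℕ × ℕ × ℕ)
  | [] => []
  | (m, k, b) :: w => (m + d₁, k + d₂, b) :: w

/-- The operator `S^{t̄₁}`: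
`S^{t̄₁}(t̄₁^m t̄₂^k a u) = t̄₁^m t̄₂^k a S^{t̄₁}(u) + t̄₁^{m+1} t̄₂^k (a ⋄ S^{t̄₁}(u))`. -/
noncomputable def S1 : List (ℕ × ℕ × ℕ) → (List (ℕ × ℕ × ℕ) →₀ ℚ)
  | [] => Finsupp.single [] 1
  | (m, k, a) :: u =>
      Finsupp.mapDomain ((m, k, a) :: ·) (S1 u)
        + Finsupp.mapDomain (addPre (m + 1) k) (diaComb a (S1 u))

/-- The operator `S^{t̄₂}`. -/
noncomputable def S2 : List (ℕ × ℕ × ℕ) → (List (ℕ × ℕ × ℕ) →₀ ℚ)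
  | [] => Finsupp.single [] 1
  | (m, k, a) :: u =>
      Finsupp.mapDomain ((m, k, a) :: ·) (S2 u)
        + Finsupp.mapDomain (addPre m (k + 1)) (diaComb a (S2 u))

/-- The operator `S^{t̄₁+t̄₂}`:
`S(t̄₁^m t̄₂^k a u) = t̄₁^m t̄₂^k a S(u) + t̄₁^m t̄₂^k (t̄₁ + t̄₂)(a ⋄ S(u))`. -/
noncomputable def S12 : List (ℕ × ℕ × ℕ) → (List (ℕ × ℕ × ℕ) →₀ ℚ)
  | [] => Finsupp.single [] 1
  | (m, k, a) :: u =>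
      Finsupp.mapDomain ((m, k, a) :: ·) (S12 u)
        + Finsupp.mapDomain (addPre (m + 1) k) (diaComb a (S12 u))
        + Finsupp.mapDomain (addPre m (k + 1)) (diaComb a (S12 u))

/-- Linear extension of `S^{t̄₁}` to combinations of words. -/
noncomputable def S1L (x : List (ℕ × ℕ × ℕ) →₀ ℚ) : List (ℕ × ℕ × ℕ) →₀ ℚ :=
  x.sum fun w c => c • S1 w

/-! All operators involved are linear, and on basis words their building blocks (prefixing a
letter, multiplying the leading symbol powers, contracting a letter into the first letter)
obey simple commutation rules: `S^{t̄₁}` commutes with symbol multiplication and with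
contraction, and turns prefixing by `t̄₁^m t̄₂^k a` into the same prefixing plus
`t̄₁^{m+1} t̄₂^k (a ⋄ ·)`. Applying `S^{t̄₁}` to the recursion for `S^{t̄₂}` therefore
reproduces the recursion for `S^{t̄₁+t̄₂}`, and induction on the word concludes. -/

abbrev Word := List (ℕ × ℕ × ℕ)

noncomputable def contract (a : ℕ) : (Word →₀ ℚ) →ₗ[ℚ] (Word →₀ ℚ) :=
  Finsupp.linearCombination ℚ (diaWord a)

noncomputable def shift (d₁ d₂ : ℕ) : (Word →₀ ℚ) →ₗ[ℚ] (Word →₀ ℚ) :=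
  Finsupp.lmapDomain ℚ ℚ (addPre d₁ d₂)

noncomputable def prepend (p : ℕ × ℕ × ℕ) : (Word →₀ ℚ) →ₗ[ℚ] (Word →₀ ℚ) :=
  Finsupp.lmapDomain ℚ ℚ (List.cons p)

noncomputable def S1Lin : (Word →₀ ℚ) →ₗ[ℚ] (Word →₀ ℚ) :=
  Finsupp.linearCombination ℚ S1

theorem S1L_eq_S1Lin (x : Word →₀ ℚ) : S1L x = S1Lin x := rfl

theorem S1Lin_single_one (w : Word) : S1Lin (Finsupp.single w 1) = S1 w := by
  simp [S1Lin]

theorem S1_cons (m k a : ℕ) (u : Word) :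
    S1 ((m, k, a) :: u) = prepend (m, k, a) (S1 u) + shift (m + 1) k (contract a (S1 u)) := by
  rw [S1]; rfl

theorem S2_cons (m k a : ℕ) (u : Word) :
    S2 ((m, k, a) :: u) = prepend (m, k, a) (S2 u) + shift m (k + 1) (contract a (S2 u)) := by
  rw [S2]; rfl

theorem S12_cons (m k a : ℕ) (u : Word) :
    S12 ((m, k, a) :: u) = prepend (m, k, a) (S12 u) + shift (m + 1) k (contract a (S12 u))
      + shift m (k + 1) (contract a (S12 u)) := by
  rw [S12]; rfl

theorem addPre_addPre (d₁ d₂ e₁ e₂ : ℕ) (w : Word) :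
    addPre d₁ d₂ (addPre e₁ e₂ w) = addPre (e₁ + d₁) (e₂ + d₂) w := by
  rcases w with _ | ⟨⟨m, k, b⟩, w⟩
  · rfl
  · simp only [addPre, add_assoc]

theorem shift_shift (d₁ d₂ e₁ e₂ : ℕ) (x : Word →₀ ℚ) :
    shift d₁ d₂ (shift e₁ e₂ x) = shift (e₁ + d₁) (e₂ + d₂) x := by
  suffices h : shift d₁ d₂ ∘ₗ shift e₁ e₂ = shift (e₁ + d₁) (e₂ + d₂) from LinearMap.congr_fun h x
  ext w : 2
  simp [shift, addPre_addPre]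

theorem shift_prepend (d₁ d₂ m k b : ℕ) (x : Word →₀ ℚ) :
    shift d₁ d₂ (prepend (m, k, b) x) = prepend (m + d₁, k + d₂, b) x := by
  suffices h : shift d₁ d₂ ∘ₗ prepend (m, k, b) = prepend (m + d₁, k + d₂, b) from
    LinearMap.congr_fun h x
  ext w : 2
  simp [shift, prepend, addPre]

theorem contract_shift (a d₁ d₂ : ℕ) (x : Word →₀ ℚ) :
    contract a (shift d₁ d₂ x) = shift d₁ d₂ (contract a x) := by
  suffices h : contract a ∘ₗ shift d₁ d₂ = shift d₁ d₂ ∘ₗ contract a from LinearMap.congr_fun h x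
  ext w : 2
  rcases w with _ | ⟨⟨m, k, b⟩, w⟩ <;> simp [contract, shift, addPre, diaWord]

theorem contract_prepend (a m k b : ℕ) (x : Word →₀ ℚ) :
    contract a (prepend (m, k, b) x) = prepend (m, k, a + b) x := by
  suffices h : contract a ∘ₗ prepend (m, k, b) = prepend (m, k, a + b) from LinearMap.congr_fun h x
  ext w : 2
  simp [contract, prepend, diaWord]

theorem contract_contract (a b : ℕ) (x : Word →₀ ℚ) :
    contract a (contract b x) = contract (a + b) x := by
  suffices h : contract a ∘ₗ contract b = contract (a + b) from LinearMap.congr_fun h x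
  ext w : 2
  rcases w with _ | ⟨⟨m, k, c⟩, w⟩ <;> simp [contract, diaWord, add_assoc]

theorem S1_addPre (d₁ d₂ : ℕ) (w : Word) : S1 (addPre d₁ d₂ w) = shift d₁ d₂ (S1 w) := by
  rcases w with _ | ⟨⟨m, k, b⟩, w⟩
  · simp [addPre, S1, shift]
  · rw [addPre, S1_cons, S1_cons, map_add, shift_prepend, shift_shift, add_right_comm m]

theorem S1Lin_shift (d₁ d₂ : ℕ) (x : Word →₀ ℚ) :
    S1Lin (shift d₁ d₂ x) = shift d₁ d₂ (S1Lin x) := by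
  suffices h : S1Lin ∘ₗ shift d₁ d₂ = shift d₁ d₂ ∘ₗ S1Lin from LinearMap.congr_fun h x
  ext w : 2
  simp [S1Lin, shift, S1_addPre]

theorem S1Lin_prepend (m k a : ℕ) (x : Word →₀ ℚ) :
    S1Lin (prepend (m, k, a) x)
      = prepend (m, k, a) (S1Lin x) + shift (m + 1) k (contract a (S1Lin x)) := by
  suffices h : S1Lin ∘ₗ prepend (m, k, a)
      = prepend (m, k, a) ∘ₗ S1Lin + shift (m + 1) k ∘ₗ contract a ∘ₗ S1Lin from
    LinearMap.congr_fun h x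
  ext w : 2
  simp [S1Lin, prepend, S1_cons]

theorem S1Lin_diaWord (a : ℕ) (w : Word) : S1Lin (diaWord a w) = contract a (S1 w) := by
  rcases w with _ | ⟨⟨m, k, b⟩, w⟩
  · simp [contract, diaWord, S1]
  · rw [diaWord, S1Lin_single_one, S1_cons, S1_cons, map_add, contract_prepend, contract_shift,
      contract_contract]

theorem S1Lin_contract (a : ℕ) (x : Word →₀ ℚ) : S1Lin (contract a x) = contract a (S1Lin x) := by
  suffices h : S1Lin ∘ₗ contract a = contract a ∘ₗ S1Lin from LinearMap.congr_fun h x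
  ext w : 2
  simp [contract, S1Lin_diaWord, S1Lin_single_one]

/-- `S^{t̄₁+t̄₂} = S^{t̄₁} ∘ S^{t̄₂}`. -/
theorem S12_eq_S1_comp_S2 (x : List (ℕ × ℕ × ℕ)) : S12 x = S1L (S2 x) := by
  rw [S1L_eq_S1Lin]
  induction x with
  | nil => rw [S12, S2, S1Lin_single_one, S1]
  | cons p u ih =>
    obtain ⟨m, k, a⟩ := p
    rw [S12_cons, S2_cons, ih, map_add, S1Lin_prepend, S1Lin_shift, S1Lin_contract]
end
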